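/- arXiv:1001.2777 — 8 statements merged into one kernel-verified Lean document; each statement's English description precedes it below -/
import Mathlib

section
/- Let n ≥ 4 be a natural number and χ ≤ 2 an integer such that 6·((n : ℤ) − χ) ≤ n·(n − 1). Then (n : ℝ) ≥ (7 + Real.sqrt (49 − 24·χ))/2; in particular n ≥ ⌈(7 + Real.sqrt (49 − 24·χ))/2⌉. -/
theorem add_sqrt_discrim_div_two_le {b c x : ℝ} (hx : b ≤ 2 * x) (h : 0 ≤ x ^ 2 - b * x + c) :
    (b + √(b ^ 2 - 4 * c)) / 2 ≤ x := by
  -- `(2 * x - b) ^ 2 - (b ^ 2 - 4 * c) = 4 * (x ^ 2 - b * x + c)`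
  have hsqrt : √(b ^ 2 - 4 * c) ≤ 2 * x - b :=
    Real.sqrt_le_iff.mpr ⟨by linarith, by nlinarith⟩
  linarith

theorem heawood_bound_general (n : ℕ) (χ : ℤ)
    (hn : 4 ≤ n)
    (h : 6 * ((n : ℤ) - χ) ≤ (n : ℤ) * ((n : ℤ) - 1)) :
    (n : ℝ) ≥ (7 + Real.sqrt (49 - 24 * (χ : ℝ))) / 2 ∧
      (n : ℤ) ≥ ⌈(7 + Real.sqrt (49 - 24 * (χ : ℝ))) / 2⌉ := by
  have hn' : (7 : ℝ) ≤ 2 * n := by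
    have : (4 : ℝ) ≤ n := by exact_mod_cast hn
    linarith
  have hquad : (0 : ℝ) ≤ (n : ℝ) ^ 2 - 7 * n + 6 * χ := by
    have : 6 * ((n : ℝ) - χ) ≤ n * (n - 1) := by exact_mod_cast h
    linarith
  have hroot : (7 + √(49 - 24 * (χ : ℝ))) / 2 ≤ n := by
    have := add_sqrt_discrim_div_two_le hn' hquad
    rwa [show (7 : ℝ) ^ 2 - 4 * (6 * χ) = 49 - 24 * χ by ring] at this
  exact ⟨hroot, Int.ceil_le.mpr (by exact_mod_cast hroot)⟩

theorem heawood_bound (n : ℕ) (χ : ℤ)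
    (hn : 4 ≤ n) (hχ : χ ≤ 2)
    (h : 6 * ((n : ℤ) - χ) ≤ (n : ℤ) * ((n : ℤ) - 1)) :
    (n : ℝ) ≥ (7 + Real.sqrt (49 - 24 * (χ : ℝ))) / 2 ∧
      (n : ℤ) ≥ ⌈(7 + Real.sqrt (49 - 24 * (χ : ℝ))) / 2⌉ :=
  heawood_bound_general n χ hn h
end

section
/- Let G be a simple graph on a nonempty finite vertex set of cardinality n, let χ ≤ 0 be an integer, and suppose the number of edges of G equals 3·(n − χ) (as integers, where n − χ > 0). Then the minimum vertex degree δ(G) of G satisfies δ(G) ≤ ⌊(5 + Real.sqrt (49 − 24·χ))/2⌋. -/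
/-!
Summing degrees gives `n δ ≤ 2|E| = 6(n - χ)`, i.e. `(δ - 6) n ≤ -6χ`. For `δ ≥ 6` the bound
`n ≥ δ + 1` turns this into the quadratic inequality `(δ - 6)(δ + 1) ≤ -6χ`, which for `χ ≤ 0`
holds trivially when `δ < 6`. Its larger root is `(5 + √(49 - 24χ))/2`.
-/

namespace SimpleGraph

variable {V : Type*} [Fintype V] (G : SimpleGraph V) [DecidableRel G.Adj]

theorem card_mul_minDegree_le_two_mul_card_edgeFinset :
    Fintype.card V * G.minDegree ≤ 2 * G.edgeFinset.card := by
  rw [← G.sum_degrees_eq_twice_card_edges, ← smul_eq_mul, ← Finset.card_univ,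
    ← Finset.sum_const]
  exact Finset.sum_le_sum fun v _ ↦ G.minDegree_le_degree v

end SimpleGraph

theorem le_div_two_add_sqrt_of_sq_le {b c x : ℝ} (h : x ^ 2 ≤ b * x + c) :
    x ≤ (b + √(b ^ 2 + 4 * c)) / 2 := by
  have hsq : (2 * x - b) ^ 2 ≤ b ^ 2 + 4 * c := by nlinarith
  linarith [le_abs_self (2 * x - b), Real.abs_le_sqrt hsq]

theorem sub_six_mul_add_one_le {δ n χ : ℤ} (hδ : 0 ≤ δ) (hχ : χ ≤ 0) (hδn : δ < n)
    (hsum : n * δ ≤ 6 * (n - χ)) : (δ - 6) * (δ + 1) ≤ -6 * χ := by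
  rcases le_or_gt δ 6 with hle | hgt <;> nlinarith

theorem graph_min_degree_bound {V : Type*} [Fintype V] [Nonempty V]
    (G : SimpleGraph V) [DecidableRel G.Adj] (χ : ℤ)
    (hχ : χ ≤ 0)
    (hE : (G.edgeFinset.card : ℤ) = 3 * ((Fintype.card V : ℤ) - χ)) :
    (G.minDegree : ℤ) ≤ ⌊(5 + Real.sqrt (49 - 24 * (χ : ℝ))) / 2⌋ := by
  have hsum : (Fintype.card V : ℤ) * G.minDegree ≤ 6 * (Fintype.card V - χ) := by
    have := G.card_mul_minDegree_le_two_mul_card_edgeFinset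
    zify at this
    omega
  have hquad : ((G.minDegree : ℤ) - 6) * (G.minDegree + 1) ≤ -6 * χ :=
    sub_six_mul_add_one_le (by positivity) hχ (by exact_mod_cast G.minDegree_lt_card) hsum
  rw [Int.le_floor]
  have hquadR : ((G.minDegree : ℝ) - 6) * (G.minDegree + 1) ≤ -6 * χ := by exact_mod_cast hquad
  have hroot := le_div_two_add_sqrt_of_sq_le (b := 5) (c := 6 - 6 * χ) (x := G.minDegree)
    (by linarith)
  rwa [show (5 : ℝ) ^ 2 + 4 * (6 - 6 * χ) = 49 - 24 * χ by ring] at hroot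
end

section
/- Let n ≥ 1 and q ≥ 3 be natural numbers and χ ≤ 0 an integer such that q ≤ n − 1 and (n : ℤ)·(6 − q) = 6·χ. Then (q : ℝ) ≤ (5 + Real.sqrt (49 − 24·χ))/2; in particular q ≤ ⌊(5 + Real.sqrt (49 − 24·χ))/2⌋. -/
/-! If q ≤ 6 then (2q - 5)² ≤ 49 ≤ 49 - 24χ. If q > 6, then q + 1 ≤ n gives
(q + 1)(q - 6) ≤ n(q - 6) = -6χ, which after completing the square is
(2q - 5)² ≤ 49 - 24χ. In both cases 2q - 5 ≤ √(49 - 24χ). -/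

theorem sq_two_mul_sub_five_le_of_lt {n q : ℕ} {χ : ℤ} (hqn : q < n) (hχ : χ ≤ 0)
    (h : (n : ℤ) * (6 - q) = 6 * χ) : (2 * (q : ℤ) - 5) ^ 2 ≤ 49 - 24 * χ := by
  rcases le_or_gt (q : ℤ) 6 with hle | hgt
  · nlinarith
  · have hmul : ((q : ℤ) + 1) * (q - 6) ≤ n * (q - 6) :=
      mul_le_mul_of_nonneg_right (by exact_mod_cast hqn) (by linarith)
    nlinarith

theorem le_add_sqrt_div_two_of_sq_sub_le {x b D : ℝ} (h : (2 * x - b) ^ 2 ≤ D) :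
    x ≤ (b + Real.sqrt D) / 2 := by
  linarith [Real.le_sqrt_of_sq_le h]

theorem equivelar_degree_bound_general (n q : ℕ) (χ : ℤ)
    (hn : 1 ≤ n) (hχ : χ ≤ 0)
    (hqn : q ≤ n - 1)
    (h : (n : ℤ) * (6 - q) = 6 * χ) :
    (q : ℝ) ≤ (5 + Real.sqrt (49 - 24 * (χ : ℝ))) / 2 ∧
      (q : ℤ) ≤ ⌊(5 + Real.sqrt (49 - 24 * (χ : ℝ))) / 2⌋ := by
  have hsq := sq_two_mul_sub_five_le_of_lt (by omega) hχ h
  have hreal : (q : ℝ) ≤ (5 + Real.sqrt (49 - 24 * (χ : ℝ))) / 2 :=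
    le_add_sqrt_div_two_of_sq_sub_le (by exact_mod_cast hsq)
  exact ⟨hreal, Int.le_floor.mpr (by exact_mod_cast hreal)⟩

theorem equivelar_degree_bound (n q : ℕ) (χ : ℤ)
    (hn : 1 ≤ n) (hq : 3 ≤ q) (hχ : χ ≤ 0)
    (hqn : q ≤ n - 1)
    (h : (n : ℤ) * (6 - q) = 6 * χ) :
    (q : ℝ) ≤ (5 + Real.sqrt (49 - 24 * (χ : ℝ))) / 2 ∧
      (q : ℤ) ≤ ⌊(5 + Real.sqrt (49 - 24 * (χ : ℝ))) / 2⌋ :=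
  equivelar_degree_bound_general n q χ hn hχ hqn h
end

section
/- Let d, δ be integers and f0 ≥ 1 an integer and χ ≤ 0 an integer such that d ≤ 2·δ, δ ≤ f0 − 1, and f0·δ ≤ 6·(f0 − χ). Then d ≤ 2·⌊(5 + Real.sqrt (49 − 24·χ))/2⌋. -/
/-! For δ ≤ 6 the bound holds because √(49 - 24χ) ≥ 7. For δ ≥ 6, the estimates f0 ≥ δ + 1 and
f0 (δ - 6) ≤ -6χ give (δ + 1)(δ - 6) ≤ -6χ, i.e. (2δ - 5)² ≤ 49 - 24χ, so 2δ - 5 ≤ √(49 - 24χ). -/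

theorem Int.le_floor_five_add_sqrt_div_two {n : ℤ} {D : ℝ} (h : 2 * n - 5 ≤ √D) :
    n ≤ ⌊(5 + √D) / 2⌋ := by
  rw [Int.le_floor]
  linarith

theorem Int.sq_two_mul_sub_five_le {δ f0 χ : ℤ} (hδ : δ ≤ f0 - 1)
    (h : f0 * δ ≤ 6 * (f0 - χ)) (h6 : 6 ≤ δ) : (2 * δ - 5) ^ 2 ≤ 49 - 24 * χ := by
  have : (δ + 1) * (δ - 6) ≤ f0 * (δ - 6) := mul_le_mul_of_nonneg_right (by omega) (by omega)
  nlinarith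

theorem covered_bound_nonpos_chi_general (d δ f0 χ : ℤ)
    (hχ : χ ≤ 0)
    (hd : d ≤ 2 * δ) (hδ : δ ≤ f0 - 1)
    (h : f0 * δ ≤ 6 * (f0 - χ)) :
    d ≤ 2 * ⌊(5 + Real.sqrt (49 - 24 * (χ : ℝ))) / 2⌋ := by
  have hsqrt : 2 * (δ : ℝ) - 5 ≤ √(49 - 24 * (χ : ℝ)) := by
    rcases le_total δ 6 with hsmall | hlarge
    · have hχ' : (χ : ℝ) ≤ 0 := by exact_mod_cast hχ
      have hseven : (7 : ℝ) ≤ √(49 - 24 * (χ : ℝ)) := Real.le_sqrt_of_sq_le (by linarith)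
      have : (δ : ℝ) ≤ 6 := by exact_mod_cast hsmall
      linarith
    · exact Real.le_sqrt_of_sq_le (by exact_mod_cast Int.sq_two_mul_sub_five_le hδ h hlarge)
  have := Int.le_floor_five_add_sqrt_div_two hsqrt
  omega

theorem covered_bound_nonpos_chi (d δ f0 χ : ℤ)
    (hf0 : 1 ≤ f0) (hχ : χ ≤ 0)
    (hd : d ≤ 2 * δ) (hδ : δ ≤ f0 - 1)
    (h : f0 * δ ≤ 6 * (f0 - χ)) :
    d ≤ 2 * ⌊(5 + Real.sqrt (49 - 24 * (χ : ℝ))) / 2⌋ :=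
  covered_bound_nonpos_chi_general d δ f0 χ hχ hd hδ h
end

section
/- Let δ be an integer, f0 ≥ 1 an integer, and χ ≤ 0 an integer such that δ ≤ f0 − 1 and f0·δ ≤ 6·(f0 − χ). Then δ ≤ ⌊(5 + Real.sqrt (49 − 24·χ))/2⌋. -/
/-! Write the bound as `2δ - 5 ≤ √(49 - 24χ)`. For `δ ≤ 6` this holds because the right side is
at least `√49 = 7`. For `δ ≥ 6` the hypotheses give `(δ + 1)(δ - 6) ≤ f0 (δ - 6) ≤ -6χ`, which is
exactly `(2δ - 5)² ≤ 49 - 24χ`. -/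

theorem two_mul_sub_five_sq_le {R : Type*} [CommRing R] [LinearOrder R] [IsStrictOrderedRing R]
    {δ f0 χ : R} (h6 : 6 ≤ δ) (hδ : δ ≤ f0 - 1) (h : f0 * δ ≤ 6 * (f0 - χ)) :
    (2 * δ - 5) ^ 2 ≤ 49 - 24 * χ := by
  have hmul : (δ + 1) * (δ - 6) ≤ f0 * (δ - 6) :=
    mul_le_mul_of_nonneg_right (by linarith) (sub_nonneg.2 h6)
  nlinarith

theorem two_mul_sub_five_le_sqrt {δ f0 χ : ℝ} (hχ : χ ≤ 0) (hδ : δ ≤ f0 - 1)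
    (h : f0 * δ ≤ 6 * (f0 - χ)) :
    2 * δ - 5 ≤ √(49 - 24 * χ) := by
  rcases le_total δ 6 with hsmall | hlarge
  · calc 2 * δ - 5 ≤ 7 := by linarith
      _ ≤ √(49 - 24 * χ) := Real.le_sqrt_of_sq_le (by linarith)
  · exact Real.le_sqrt_of_sq_le (two_mul_sub_five_sq_le hlarge hδ h)

theorem regular_cell_min_degree_nonpos_chi_general (δ f0 χ : ℤ)
    (hχ : χ ≤ 0)
    (hδ : δ ≤ f0 - 1)
    (h : f0 * δ ≤ 6 * (f0 - χ)) :
    δ ≤ ⌊(5 + Real.sqrt (49 - 24 * (χ : ℝ))) / 2⌋ := by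
  have key := two_mul_sub_five_le_sqrt (δ := (δ : ℝ)) (f0 := (f0 : ℝ)) (χ := (χ : ℝ))
    (by exact_mod_cast hχ) (by exact_mod_cast hδ) (by exact_mod_cast h)
  rw [Int.le_floor]
  linarith

theorem regular_cell_min_degree_nonpos_chi (δ f0 χ : ℤ)
    (hf0 : 1 ≤ f0) (hχ : χ ≤ 0)
    (hδ : δ ≤ f0 - 1)
    (h : f0 * δ ≤ 6 * (f0 - χ)) :
    δ ≤ ⌊(5 + Real.sqrt (49 - 24 * (χ : ℝ))) / 2⌋ :=
  regular_cell_min_degree_nonpos_chi_general δ f0 χ hχ hδ h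
end

section
/- Let p ≥ 5 be a prime and let n ≥ 1 and q be natural numbers such that q ≤ n − 1 and (n : ℤ)·((q : ℤ) − 6) = 6·p. Then q = 7 or q = 8 or q = 9 or q = 12. -/
/-! Write `q = d + 6`, so `n * d = 6 * p` with `n > q ≥ 7`. If `p ∣ d` then `n ∣ 6`, impossible
since `n > 6`; hence `d` divides `6`, i.e. `d ∈ {1, 2, 3, 6}`. -/

theorem Nat.dvd_of_mul_eq_mul_prime {p n d m : ℕ} (hp : p.Prime) (h : n * d = m * p)
    (hm : 0 < m) (hmn : m < n) : d ∣ m := by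
  rcases Nat.coprime_or_dvd_of_prime hp d with hcop | ⟨k, rfl⟩
  · exact hcop.symm.dvd_of_dvd_mul_right ⟨n, by rw [← h, mul_comm]⟩
  · have hnk : n * k = m := by
      apply Nat.eq_of_mul_eq_mul_right hp.pos
      rw [← h]; ring
    exact absurd (Nat.le_of_dvd hm ⟨k, hnk.symm⟩) (by omega)

theorem equivelar_prime_chi_general (p n q : ℕ)
    (hp : p.Prime)
    (hqn : q ≤ n - 1)
    (h : (n : ℤ) * ((q : ℤ) - 6) = 6 * p) :
    q = 7 ∨ q = 8 ∨ q = 9 ∨ q = 12 := by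
  have hq : 6 < q := by
    by_contra! hq
    have hle : (n : ℤ) * ((q : ℤ) - 6) ≤ 0 :=
      mul_nonpos_of_nonneg_of_nonpos (by positivity) (by omega)
    have := hp.pos
    omega
  obtain ⟨d, rfl⟩ : ∃ d, q = d + 6 := ⟨q - 6, by omega⟩
  have hnd : n * d = 6 * p := by
    push_cast at h
    exact_mod_cast (by linarith : (n : ℤ) * d = 6 * p)
  have hd : d ∈ Nat.divisors 6 :=
    Nat.mem_divisors.2 ⟨Nat.dvd_of_mul_eq_mul_prime hp hnd (by norm_num) (by omega), by norm_num⟩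
  rw [show Nat.divisors 6 = {1, 2, 3, 6} by decide] at hd
  simp only [Finset.mem_insert, Finset.mem_singleton] at hd
  omega

theorem equivelar_prime_chi (p n q : ℕ)
    (hp : p.Prime) (hp5 : 5 ≤ p)
    (hn : 1 ≤ n) (hqn : q ≤ n - 1)
    (h : (n : ℤ) * ((q : ℤ) - 6) = 6 * p) :
    q = 7 ∨ q = 8 ∨ q = 9 ∨ q = 12 :=
  equivelar_prime_chi_general p n q hp hqn h
end

section
/- Let k ≥ 1 and m ≥ 0 be natural numbers, set n = 7 + 12·k + m and χ = −2·(k : ℤ)·n. Then ⌊(5 + Real.sqrt (49 − 24·χ))/2⌋ = 6 + 12·k if and only if m ≤ 2. -/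
/-!
The discriminant 49 − 24χ = (7 + 24k)² + 48km is never below (7 + 24k)², so the floor equals
6 + 12k exactly when the discriminant stays below (9 + 24k)², i.e. when 48km < 96k + 32;
for k ≥ 1 this says m ≤ 2.
-/

theorem Int.floor_add_sqrt_div_two_eq_iff {c q : ℤ} {D : ℝ} (h : c < 2 * q) :
    ⌊(c + √D) / 2⌋ = q ↔ ((2 * q - c) ^ 2 : ℝ) ≤ D ∧ D < (2 * q - c + 2) ^ 2 := by
  have hpos : (0 : ℝ) < 2 * q - c := by rw [sub_pos]; exact_mod_cast h
  rw [Int.floor_eq_iff, ← Real.le_sqrt' hpos, ← Real.sqrt_lt' (by linarith)]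
  constructor <;> rintro ⟨hlo, hhi⟩ <;> constructor <;> linarith

theorem ringel_discriminant_eq (k m : ℕ) :
    (49 - 24 * ((-2 * (k : ℤ) * (7 + 12 * k + m) : ℤ) : ℝ))
      = (7 + 24 * k) ^ 2 + 48 * k * m := by
  push_cast; ring

theorem ringel_excess_lt_iff {k m : ℕ} (hk : 1 ≤ k) : 48 * k * m < 96 * k + 32 ↔ m ≤ 2 := by
  refine ⟨fun h => ?_, fun hm => by nlinarith⟩
  by_contra! hm
  nlinarith

theorem generalized_ringel_equality_iff (k m : ℕ) (hk : 1 ≤ k) :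
    (⌊(5 + Real.sqrt (49 - 24 * ((-2 * (k : ℤ) * (7 + 12 * k + m) : ℤ) : ℝ))) / 2⌋
        = 6 + 12 * (k : ℤ)) ↔ m ≤ 2 := by
  have hfloor := Int.floor_add_sqrt_div_two_eq_iff (c := 5) (q := 6 + 12 * k)
    (D := (7 + 24 * k) ^ 2 + 48 * k * m) (by omega)
  push_cast at hfloor
  rw [ringel_discriminant_eq, hfloor, ← ringel_excess_lt_iff hk, ← Nat.cast_lt (α := ℝ)]
  push_cast
  have hkm : (0 : ℝ) ≤ 48 * k * m := by positivity
  constructor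
  · rintro ⟨-, hlt⟩
    linarith
  · intro hlt
    constructor <;> linarith
end

section
/- Let k ≥ 1 be a natural number, set n = 8 + 12·k and χ = −2·(k : ℤ)·n. Then ⌈(7 + Real.sqrt (49 − 24·χ))/2⌉ = 8 + 12·k. -/
/-! The Heawood discriminant `49 - 24χ` of the surface equals `(24k + 7)² + 48k`, which lies strictly
between `(24k + 7)²` and `(24k + 9)²` once `k ≥ 1`; hence `(7 + √(49 - 24χ)) / 2` lies in
`(12k + 7, 12k + 8]` and its ceiling is `12k + 8`. -/

theorem ceil_seven_add_sqrt_div_two_eq {N : ℤ} {D : ℝ} (hN : (0 : ℝ) ≤ 2 * N - 9)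
    (hlo : (2 * N - 9 : ℝ) ^ 2 < D) (hhi : D ≤ (2 * N - 7 : ℝ) ^ 2) :
    ⌈(7 + √D) / 2⌉ = N := by
  have hlo' : 2 * N - 9 < √D := (Real.lt_sqrt hN).2 hlo
  have hhi' : √D ≤ 2 * N - 7 := Real.sqrt_le_iff.2 ⟨by linarith, hhi⟩
  rw [Int.ceil_eq_iff]
  constructor <;> linarith

theorem heawood_discriminant_eq (k : ℕ) :
    (49 - 24 * ((-2 * (k : ℤ) * (8 + 12 * k) : ℤ) : ℝ)) = (24 * k + 7) ^ 2 + 48 * k := by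
  push_cast
  ring

theorem generalized_ringel_vertex_minimal (k : ℕ) (hk : 1 ≤ k) :
    ⌈(7 + Real.sqrt (49 - 24 * ((-2 * (k : ℤ) * (8 + 12 * k) : ℤ) : ℝ))) / 2⌉
      = 8 + 12 * (k : ℤ) := by
  have hk' : (1 : ℝ) ≤ k := by exact_mod_cast hk
  rw [heawood_discriminant_eq]
  apply ceil_seven_add_sqrt_div_two_eq <;> push_cast <;> nlinarith
end
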